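/- Logarithmic norm of the recurrent-net drift Jacobian: Let f(x) = −x/τ + A σ⃗(x) where τ > 0, A ∈ Mat(d×d, ℝ), and σ⃗(x) = (σ(x₁),…,σ(x_d)) for a C¹ function σ : ℝ → ℝ with 0 ≤ σ'(r) ≤ γ for all r. Then for every x ∈ ℝᵈ, λ_max((Df(x) + Df(x)ᵀ)/2) ≤ −1/τ + γ · max_{1≤i≤d} (max(Aᵢᵢ, 0) + (1/2) Σ_{j≠i} (|Aᵢⱼ| + |Aⱼᵢ|)). -/

import Mathlib

open Matrix
open scoped RealInnerProductSpace

/-- `λ_max` of a (symmetric) matrix as the supremum of the Rayleigh quotient over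
Euclidean unit vectors. -/
noncomputable def lamMax {d : ℕ} (S : Matrix (Fin d) (Fin d) ℝ) : ℝ :=
  sSup {r | ∃ v : EuclideanSpace ℝ (Fin d), ‖v‖ = 1 ∧
    r = ⟪(Matrix.toEuclideanCLM (𝕜 := ℝ) S) v, v⟫}

private lemma inner_toEuclideanCLM {d : ℕ} (S : Matrix (Fin d) (Fin d) ℝ)
    (v : EuclideanSpace ℝ (Fin d)) :
    ⟪(Matrix.toEuclideanCLM (𝕜 := ℝ) S) v, v⟫ = ∑ i, ∑ j, S i j * v j * v i := by
  have h : (Matrix.toEuclideanCLM (𝕜 := ℝ) S) v = Matrix.toEuclideanLin S v := rfl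
  rw [h, Matrix.toEuclideanLin_apply]
  simp [PiLp.inner_apply, Matrix.mulVec, dotProduct, Finset.sum_mul]
  exact Finset.sum_congr rfl fun i _ => by rw [Finset.mul_sum]; exact Finset.sum_congr rfl fun j _ => by ring

private lemma double_sum_erase_comm {d : ℕ} (f : Fin d → Fin d → ℝ) :
    ∑ i, ∑ j ∈ Finset.univ.erase i, f i j = ∑ j, ∑ i ∈ Finset.univ.erase j, f i j := by
  apply Finset.sum_comm'
  intro i j
  simp [eq_comm, ne_comm, and_comm]

/-- Logarithmic norm of the recurrent-net drift Jacobian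
`Df(x) = −(1/τ)I + A · diag(σ'(x₁),…,σ'(x_d))`, where `0 ≤ σ' ≤ γ`:
`λ_max((Df + Dfᵀ)/2) ≤ −1/τ + γ · max_i (max(Aᵢᵢ,0) + (1/2)Σ_{j≠i}(|Aᵢⱼ| + |Aⱼᵢ|))`. -/
theorem recurrent_net_logNorm_bound {d : ℕ} (hd : 0 < d)
    (τ γ : ℝ) (hτ : 0 < τ)
    (A : Matrix (Fin d) (Fin d) ℝ)
    (σ : ℝ → ℝ) (hσ : Differentiable ℝ σ)
    (hσ' : ∀ r : ℝ, 0 ≤ deriv σ r ∧ deriv σ r ≤ γ)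
    (x : Fin d → ℝ) :
    lamMax ((1 / 2 : ℝ) •
        ((-(1 / τ) • (1 : Matrix (Fin d) (Fin d) ℝ)
            + A * Matrix.diagonal fun i => deriv σ (x i))
          + (-(1 / τ) • (1 : Matrix (Fin d) (Fin d) ℝ)
            + A * Matrix.diagonal fun i => deriv σ (x i))ᵀ)) ≤
      -(1 / τ) + γ * ⨆ i : Fin d,
        (max (A i i) 0 + (1 / 2) * ∑ j ∈ Finset.univ.erase i, (|A i j| + |A j i|)) := by
  have hne : Nonempty (Fin d) := ⟨⟨0, hd⟩⟩
  set s : Fin d → ℝ := fun i => deriv σ (x i) with hs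
  have hs0 : ∀ i, 0 ≤ s i := fun i => (hσ' (x i)).1
  have hsγ : ∀ i, s i ≤ γ := fun i => (hσ' (x i)).2
  have hγ0 : 0 ≤ γ := le_trans (hσ' 0).1 (hσ' 0).2
  set g : Fin d → ℝ := fun i =>
    max (A i i) 0 + (1 / 2) * ∑ j ∈ Finset.univ.erase i, (|A i j| + |A j i|) with hg
  have hgsup : ∀ i, g i ≤ ⨆ i, g i := fun i =>
    le_ciSup (Set.Finite.bddAbove (Set.finite_range g)) i
  set S : Matrix (Fin d) (Fin d) ℝ := (1 / 2 : ℝ) •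
        ((-(1 / τ) • (1 : Matrix (Fin d) (Fin d) ℝ)
            + A * Matrix.diagonal fun i => deriv σ (x i))
          + (-(1 / τ) • (1 : Matrix (Fin d) (Fin d) ℝ)
            + A * Matrix.diagonal fun i => deriv σ (x i))ᵀ) with hS
  set c : Fin d → Fin d → ℝ := fun i j => (1/2) * (A i j * s j + A j i * s i) with hc
  have hSentry : ∀ i j, S i j = (if i = j then -(1/τ) else 0) + c i j := by
    intro i j
    simp only [hS, hc, Matrix.smul_apply, Matrix.add_apply, Matrix.transpose_apply,
      Matrix.mul_diagonal, Matrix.one_apply, smul_eq_mul]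
    by_cases h : i = j <;> simp [h, eq_comm] <;> ring
  -- bound for each unit vector
  have key : ∀ v : EuclideanSpace ℝ (Fin d), ‖v‖ = 1 →
      ⟪(Matrix.toEuclideanCLM (𝕜 := ℝ) S) v, v⟫ ≤
        -(1 / τ) + γ * ⨆ i, g i := by
    intro v hv
    have hvsum : ∑ i, v i * v i = 1 := by
      have h2 := real_inner_self_eq_norm_sq v
      rw [hv, PiLp.inner_apply] at h2
      simpa [sq] using h2
    rw [_root_.inner_toEuclideanCLM]
    have expand : ∑ i, ∑ j, S i j * v j * v i =
        ∑ i, (-(1/τ) * (v i * v i) + (c i i * (v i * v i)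
          + ∑ j ∈ Finset.univ.erase i, c i j * v j * v i)) := by
      apply Finset.sum_congr rfl
      intro i _
      rw [← Finset.sum_erase_add _ _ (Finset.mem_univ i)]
      have : ∑ j ∈ Finset.univ.erase i, S i j * v j * v i
          = ∑ j ∈ Finset.univ.erase i, c i j * v j * v i := by
        apply Finset.sum_congr rfl
        intro j hj
        rw [hSentry]
        rw [Finset.mem_erase] at hj
        simp [Ne.symm hj.1]
      rw [this, hSentry]
      simp
      ring
    rw [expand]
    -- bound the cross terms
    have cross : ∀ i : Fin d, ∑ j ∈ Finset.univ.erase i, c i j * v j * v i ≤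
        ∑ j ∈ Finset.univ.erase i, |c i j| * ((v i * v i + v j * v j) / 2) := by
      intro i
      apply Finset.sum_le_sum
      intro j _
      calc c i j * v j * v i ≤ |c i j * v j * v i| := le_abs_self _
        _ = |c i j| * (|v i| * |v j|) := by rw [abs_mul, abs_mul]; ring
        _ ≤ |c i j| * ((v i * v i + v j * v j) / 2) := by
            apply mul_le_mul_of_nonneg_left _ (abs_nonneg _)
            nlinarith [sq_nonneg (|v i| - |v j|), abs_nonneg (v i), abs_nonneg (v j),
              sq_abs (v i), sq_abs (v j)]
    -- symmetry of |c|
    have hcsymm : ∀ i j, c j i = c i j := by intro i j; simp only [hc]; ring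
    -- rearrange the bound sum
    have rearrange : ∑ i, ∑ j ∈ Finset.univ.erase i, |c i j| * ((v i * v i + v j * v j) / 2)
        = ∑ i, (∑ j ∈ Finset.univ.erase i, |c i j|) * (v i * v i) := by
      have split : ∀ i, ∑ j ∈ Finset.univ.erase i, |c i j| * ((v i * v i + v j * v j) / 2)
          = ∑ j ∈ Finset.univ.erase i, (|c i j| * (v i * v i) / 2)
            + ∑ j ∈ Finset.univ.erase i, (|c i j| * (v j * v j) / 2) := by
        intro i
        rw [← Finset.sum_add_distrib]
        apply Finset.sum_congr rfl
        intro j _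
        ring
      simp only [split]
      rw [Finset.sum_add_distrib]
      have swap : ∑ i, ∑ j ∈ Finset.univ.erase i, (|c i j| * (v j * v j) / 2)
          = ∑ i, ∑ j ∈ Finset.univ.erase i, (|c i j| * (v i * v i) / 2) := by
        rw [double_sum_erase_comm (fun i j => |c i j| * (v j * v j) / 2)]
        apply Finset.sum_congr rfl
        intro i _
        apply Finset.sum_congr rfl
        intro j _
        rw [hcsymm i j]
      rw [swap, ← Finset.sum_add_distrib]
      apply Finset.sum_congr rfl
      intro i _
      rw [← Finset.sum_add_distrib, Finset.sum_mul]
      apply Finset.sum_congr rfl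
      intro j _
      ring
    -- per-coordinate coefficient bound
    have coeff : ∀ i : Fin d, c i i + ∑ j ∈ Finset.univ.erase i, |c i j| ≤ γ * g i := by
      intro i
      have h1 : c i i ≤ γ * max (A i i) 0 := by
        simp only [hc]
        rcases le_or_gt (A i i) 0 with h | h
        · have : A i i * s i ≤ 0 := mul_nonpos_of_nonpos_of_nonneg h (hs0 i)
          have h2 : (0:ℝ) ≤ γ * max (A i i) 0 := by positivity
          nlinarith
        · have : A i i * s i ≤ A i i * γ := mul_le_mul_of_nonneg_left (hsγ i) h.le
          rw [max_eq_left h.le]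
          nlinarith
      have h2 : ∑ j ∈ Finset.univ.erase i, |c i j| ≤
          γ * ((1/2) * ∑ j ∈ Finset.univ.erase i, (|A i j| + |A j i|)) := by
        rw [Finset.mul_sum, Finset.mul_sum]
        apply Finset.sum_le_sum
        intro j _
        simp only [hc]
        have hb1 : |A i j * s j| ≤ |A i j| * γ := by
          rw [abs_mul, abs_of_nonneg (hs0 j)]
          exact mul_le_mul_of_nonneg_left (hsγ j) (abs_nonneg _)
        have hb2 : |A j i * s i| ≤ |A j i| * γ := by
          rw [abs_mul, abs_of_nonneg (hs0 i)]
          exact mul_le_mul_of_nonneg_left (hsγ i) (abs_nonneg _)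
        calc |1/2 * (A i j * s j + A j i * s i)|
            ≤ 1/2 * (|A i j * s j| + |A j i * s i|) := by
              rw [abs_mul]
              have := abs_add_le (A i j * s j) (A j i * s i)
              rw [abs_of_nonneg (by norm_num : (0:ℝ) ≤ 1/2)]
              nlinarith
          _ ≤ 1/2 * (|A i j| * γ + |A j i| * γ) := by nlinarith
          _ = γ * (1/2 * (|A i j| + |A j i|)) := by ring
      calc c i i + ∑ j ∈ Finset.univ.erase i, |c i j|
          ≤ γ * max (A i i) 0 + γ * ((1/2) * ∑ j ∈ Finset.univ.erase i, (|A i j| + |A j i|)) :=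
            add_le_add h1 h2
        _ = γ * g i := by simp only [hg]; ring
    -- put it together
    calc ∑ i, (-(1/τ) * (v i * v i) + (c i i * (v i * v i)
          + ∑ j ∈ Finset.univ.erase i, c i j * v j * v i))
        ≤ ∑ i, (-(1/τ) * (v i * v i) + (c i i * (v i * v i)
          + ∑ j ∈ Finset.univ.erase i, |c i j| * ((v i * v i + v j * v j) / 2))) := by
          apply Finset.sum_le_sum
          intro i _
          exact add_le_add_right (add_le_add_right (cross i) _) _
      _ = ∑ i, (-(1/τ) * (v i * v i) + c i i * (v i * v i))
          + ∑ i, ∑ j ∈ Finset.univ.erase i, |c i j| * ((v i * v i + v j * v j) / 2) := by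
          rw [← Finset.sum_add_distrib]
          apply Finset.sum_congr rfl
          intro i _
          ring
      _ = ∑ i, (-(1/τ) * (v i * v i) + c i i * (v i * v i))
          + ∑ i, (∑ j ∈ Finset.univ.erase i, |c i j|) * (v i * v i) := by rw [rearrange]
      _ = ∑ i, (-(1/τ) + (c i i + ∑ j ∈ Finset.univ.erase i, |c i j|)) * (v i * v i) := by
          rw [← Finset.sum_add_distrib]
          apply Finset.sum_congr rfl
          intro i _
          ring
      _ ≤ ∑ i, (-(1/τ) + γ * ⨆ k, g k) * (v i * v i) := by
          apply Finset.sum_le_sum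
          intro i _
          apply mul_le_mul_of_nonneg_right _ (mul_self_nonneg _)
          have := le_trans (coeff i) (mul_le_mul_of_nonneg_left (hgsup i) hγ0)
          linarith
      _ = (-(1/τ) + γ * ⨆ k, g k) * ∑ i, v i * v i := by rw [Finset.mul_sum]
      _ = -(1/τ) + γ * ⨆ k, g k := by rw [hvsum, mul_one]
  -- conclude via csSup
  apply csSup_le
  · exact ⟨_, EuclideanSpace.single (⟨0, hd⟩ : Fin d) (1:ℝ),
      by simp [EuclideanSpace.norm_single], rfl⟩
  · rintro r ⟨v, hv, rfl⟩
    exact key v hv
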